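/- arXiv:2505.20069 — 6 statements merged into one kernel-verified Lean document; each statement's English description precedes it below -/
import Mathlib

section
/- Universal reduction is sound for S-form DQBF: if the S-form DQBF Π (φ ∧ L(u)) is true (witnessed by Skolem functions), where u is a universal variable and no existential variable occurring in L has u in its dependency set, then Π (φ ∧ L(u) ∧ L(0)) is true, witnessed by the same Skolem functions; symmetrically for L(1). -/
inductive Fml where
  | tru | fls
  | var (v : ℕ)
  | neg (φ : Fml)
  | conj (φ ψ : Fml)
  | disj (φ ψ : Fml)

def Fml.eval (α : ℕ → Bool) : Fml → Bool
  | .tru => true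
  | .fls => false
  | .var v => α v
  | .neg φ => !(φ.eval α)
  | .conj φ ψ => φ.eval α && ψ.eval α
  | .disj φ ψ => φ.eval α || ψ.eval α

def Fml.vars : Fml → Finset ℕ
  | .tru => ∅
  | .fls => ∅
  | .var v => {v}
  | .neg φ => φ.vars
  | .conj φ ψ => φ.vars ∪ ψ.vars
  | .disj φ ψ => φ.vars ∪ ψ.vars

/-- Substitute the constant `c` for the variable `u`. -/
def Fml.substC (u : ℕ) (c : Bool) : Fml → Fml
  | .tru => .tru
  | .fls => .fls
  | .var v => if v = u then (if c then .tru else .fls) else .var v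
  | .neg φ => .neg (φ.substC u c)
  | .conj φ ψ => .conj (φ.substC u c) (ψ.substC u c)
  | .disj φ ψ => .disj (φ.substC u c) (ψ.substC u c)

/-- The total assignment induced by a universal assignment `τ` and Skolem
functions `σ` for the existential variables `E`. -/
def totalAsgn (E : Finset ℕ) (σ : ℕ → (ℕ → Bool) → Bool) (τ : ℕ → Bool) : ℕ → Bool :=
  fun w => if w ∈ E then σ w τ else τ w

/-- `σ` is a family of Skolem functions respecting the dependency sets `dep`. -/
def skolemDeps (E : Finset ℕ) (dep : ℕ → Finset ℕ) (σ : ℕ → (ℕ → Bool) → Bool) : Prop :=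
  ∀ x ∈ E, ∀ τ τ' : ℕ → Bool, (∀ w ∈ dep x, τ w = τ' w) → σ x τ = σ x τ'

lemma Fml.eval_substC (u : ℕ) (c : Bool) (α : ℕ → Bool) :
    ∀ L : Fml, (L.substC u c).eval α = L.eval (fun w => if w = u then c else α w) := by
  intro L
  induction L with
  | tru => rfl
  | fls => rfl
  | var v =>
      simp only [Fml.substC, Fml.eval]
      by_cases h : v = u <;> simp [h] <;> cases c <;> rfl
  | neg φ ih => simp [Fml.substC, Fml.eval, ih]
  | conj φ ψ ih1 ih2 => simp [Fml.substC, Fml.eval, ih1, ih2]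
  | disj φ ψ ih1 ih2 => simp [Fml.substC, Fml.eval, ih1, ih2]

lemma Fml.eval_congr (α β : ℕ → Bool) :
    ∀ L : Fml, (∀ v ∈ L.vars, α v = β v) → L.eval α = L.eval β := by
  intro L
  induction L with
  | tru => intro _; rfl
  | fls => intro _; rfl
  | var v => intro h; exact h v (by simp [Fml.vars])
  | neg φ ih => intro h; simp [Fml.eval, ih h]
  | conj φ ψ ih1 ih2 =>
      intro h
      simp only [Fml.eval]
      rw [ih1 (fun v hv => h v (by simp [Fml.vars, hv])),
          ih2 (fun v hv => h v (by simp [Fml.vars, hv]))]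
  | disj φ ψ ih1 ih2 =>
      intro h
      simp only [Fml.eval]
      rw [ih1 (fun v hv => h v (by simp [Fml.vars, hv])),
          ih2 (fun v hv => h v (by simp [Fml.vars, hv]))]

lemma universal_reduction_key
    (E : Finset ℕ) (dep : ℕ → Finset ℕ) (φ L : Fml) (u : ℕ)
    (hu : u ∉ E)
    (hL : ∀ x ∈ L.vars, x ∈ E → u ∉ dep x)
    (σ : ℕ → (ℕ → Bool) → Bool)
    (hσ : skolemDeps E dep σ)
    (hsat : ∀ τ : ℕ → Bool, (Fml.conj φ L).eval (totalAsgn E σ τ) = true)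
    (c : Bool) (τ : ℕ → Bool) :
    (L.substC u c).eval (totalAsgn E σ τ) = true := by
  set τ' : ℕ → Bool := fun w => if w = u then c else τ w with hτ'
  have h := hsat τ'
  simp only [Fml.eval, Bool.and_eq_true] at h
  rw [Fml.eval_substC]
  rw [Fml.eval_congr _ (totalAsgn E σ τ')]
  · exact h.2
  · intro v hv
    by_cases hvE : v ∈ E
    · simp only [totalAsgn, hvE, if_pos]
      by_cases hvu : v = u
      · exact absurd (hvu ▸ hvE) hu
      · simp only [hvu, if_neg, ite_false]
        exact (hσ v hvE τ τ' (fun w hw => by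
          have : w ≠ u := fun h' => hL v hv hvE (h' ▸ hw)
          simp [hτ', this])).symm ▸ rfl
    · by_cases hvu : v = u
      · subst hvu
        simp [totalAsgn, hvE, hτ']
      · simp [totalAsgn, hvE, hτ', hvu]

/-- Soundness of universal reduction for S-form DQBF: if the Skolem functions `σ`
witness the truth of Π (φ ∧ L(u)), `u` is universal, and no existential variable
occurring in `L` has `u` in its dependency set, then the same Skolem functions
witness the truth of Π (φ ∧ L(u) ∧ L(0)) and of Π (φ ∧ L(u) ∧ L(1)). -/
theorem universal_reduction_sound
    (E : Finset ℕ) (dep : ℕ → Finset ℕ) (φ L : Fml) (u : ℕ)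
    (hu : u ∉ E)
    (hL : ∀ x ∈ L.vars, x ∈ E → u ∉ dep x)
    (σ : ℕ → (ℕ → Bool) → Bool)
    (hσ : skolemDeps E dep σ)
    (hsat : ∀ τ : ℕ → Bool, (Fml.conj φ L).eval (totalAsgn E σ τ) = true) :
    (∀ τ : ℕ → Bool,
        (Fml.conj (Fml.conj φ L) (L.substC u false)).eval (totalAsgn E σ τ) = true) ∧
    (∀ τ : ℕ → Bool,
        (Fml.conj (Fml.conj φ L) (L.substC u true)).eval (totalAsgn E σ τ) = true) := by
  constructor <;> intro τ <;>
    simp only [Fml.eval, Bool.and_eq_true] <;>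
    exact ⟨(Bool.and_eq_true _ _).mp (hsat τ),
      universal_reduction_key E dep φ L u hu hL σ hσ hsat _ τ⟩
end

section
/- Independent extension is sound: if the S-form DQBF Π φ is true, v is a fresh existential variable not in Π or φ, α is a partial assignment to universal variables, b is a Boolean function over literals Y of existing variables, and v is given dependency set D_v = (⋃_{y∈Y} D_y) \ dom(α), then the S-form DQBF Π ∃v(D_v) (φ ∧ (α → (v ↔ b(Y)))) is true. -/
abbrev Lit := ℕ × Bool

/-- Dependency set of a variable: declared set for existentials, itself for universals. -/
def depOf (E : Finset ℕ) (dep : ℕ → Finset ℕ) (y : ℕ) : Finset ℕ :=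
  if y ∈ E then dep y else {y}

/-- A function only depends on the variables in `D`. -/
def depOnly (D : Finset ℕ) (f : (ℕ → Bool) → Bool) : Prop :=
  ∀ τ τ' : ℕ → Bool, (∀ w ∈ D, τ w = τ' w) → f τ = f τ'

theorem Fml.eval_congr_s3 {α α' : ℕ → Bool} (φ : Fml)
    (h : ∀ w ∈ φ.vars, α w = α' w) : φ.eval α = φ.eval α' := by
  induction φ with
  | tru => rfl
  | fls => rfl
  | var v => exact h v (by simp [Fml.vars])
  | neg φ ih => simp [Fml.eval, ih fun w hw => h w hw]
  | conj φ ψ ihφ ihψ =>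
      simp only [Fml.eval, Fml.vars] at *
      rw [ihφ fun w hw => h w (Finset.mem_union_left _ hw),
        ihψ fun w hw => h w (Finset.mem_union_right _ hw)]
  | disj φ ψ ihφ ihψ =>
      simp only [Fml.eval, Fml.vars] at *
      rw [ihφ fun w hw => h w (Finset.mem_union_left _ hw),
        ihψ fun w hw => h w (Finset.mem_union_right _ hw)]

/-- Soundness of the Independent Extension rule: if the S-form DQBF Π φ is true
(witnessed by Skolem functions σ), `v` is a fresh existential variable, `α` is a
partial assignment (domain `adom`, values `aval`) to universal variables, and `b`
is a Boolean function over the literals `Y`, then with dependency set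
`D_v = (⋃_{y∈Y} D_y) \ dom α` the DQBF Π ∃v(D_v) (φ ∧ (α → (v ↔ b(Y)))) is true. -/
theorem independent_extension_sound
    (E : Finset ℕ) (dep : ℕ → Finset ℕ) (φ : Fml)
    (σ : ℕ → (ℕ → Bool) → Bool)
    (hσ : skolemDeps E dep σ)
    (hsat : ∀ τ : ℕ → Bool, φ.eval (totalAsgn E σ τ) = true)
    (v : ℕ) (Y : Finset Lit) (adom : Finset ℕ) (aval : ℕ → Bool)
    (hadomU : ∀ u ∈ adom, u ∉ E)
    (hvE : v ∉ E) (hvφ : v ∉ φ.vars) (hvY : ∀ y ∈ Y, y.1 ≠ v) (hvα : v ∉ adom)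
    (b : (ℕ → Bool) → Bool)
    (hb : ∀ γ γ' : ℕ → Bool, (∀ y ∈ Y, γ y.1 = γ' y.1) → b γ = b γ') :
    ∃ σv : (ℕ → Bool) → Bool,
      depOnly ((Y.biUnion (fun y => depOf E dep y.1)) \ adom) σv ∧
      skolemDeps (insert v E)
        (Function.update dep v ((Y.biUnion (fun y => depOf E dep y.1)) \ adom))
        (Function.update σ v σv) ∧
      ∀ τ : ℕ → Bool,
        φ.eval (totalAsgn (insert v E) (Function.update σ v σv) τ) = true ∧
        ((∀ u ∈ adom, τ u = aval u) →
          (totalAsgn (insert v E) (Function.update σ v σv) τ v =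
            b (totalAsgn (insert v E) (Function.update σ v σv) τ))) := by
  set Dv : Finset ℕ := (Y.biUnion (fun y => depOf E dep y.1)) \ adom with hDv
  set ov : (ℕ → Bool) → (ℕ → Bool) := fun β w => if w ∈ adom then aval w else β w with hov
  refine ⟨fun β => b (totalAsgn E σ (ov β)), ?_, ?_, ?_⟩
  · -- depOnly
    intro τ τ' h
    apply hb
    intro y hy
    simp only [totalAsgn]
    by_cases hyE : y.1 ∈ E
    · simp only [hyE, if_true]
      apply hσ y.1 hyE
      intro w hw
      simp only [hov]
      by_cases hwα : w ∈ adom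
      · simp [hwα]
      · simp only [hwα, if_false]
        exact h w (Finset.mem_sdiff.mpr ⟨Finset.mem_biUnion.mpr
          ⟨y, hy, by simp [depOf, hyE, hw]⟩, hwα⟩)
    · simp only [hyE, if_false, hov]
      by_cases hyα : y.1 ∈ adom
      · simp [hyα]
      · simp only [hyα, if_false]
        exact h y.1 (Finset.mem_sdiff.mpr ⟨Finset.mem_biUnion.mpr
          ⟨y, hy, by simp [depOf, hyE]⟩, hyα⟩)
  · -- skolemDeps
    intro x hx τ τ' h
    rcases Finset.mem_insert.mp hx with rfl | hxE
    · simp only [Function.update_self]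
      rw [Function.update_self] at h
      apply hb
      intro y hy
      simp only [totalAsgn]
      by_cases hyE : y.1 ∈ E
      · simp only [hyE, if_true]
        apply hσ y.1 hyE
        intro w hw
        simp only [hov]
        by_cases hwα : w ∈ adom
        · simp [hwα]
        · simp only [hwα, if_false]
          exact h w (Finset.mem_sdiff.mpr ⟨Finset.mem_biUnion.mpr
            ⟨y, hy, by simp [depOf, hyE, hw]⟩, hwα⟩)
      · simp only [hyE, if_false, hov]
        by_cases hyα : y.1 ∈ adom
        · simp [hyα]
        · simp only [hyα, if_false]
          exact h y.1 (Finset.mem_sdiff.mpr ⟨Finset.mem_biUnion.mpr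
            ⟨y, hy, by simp [depOf, hyE]⟩, hyα⟩)
    · have hxv : x ≠ v := fun h' => hvE (h' ▸ hxE)
      rw [Function.update_of_ne hxv]
      rw [Function.update_of_ne hxv] at h
      exact hσ x hxE τ τ' h
  · intro τ
    have hagree : ∀ w ≠ v,
        totalAsgn (insert v E) (Function.update σ v (fun β => b (totalAsgn E σ (ov β)))) τ w
          = totalAsgn E σ τ w := by
      intro w hw
      simp only [totalAsgn, Finset.mem_insert]
      by_cases hwE : w ∈ E
      · simp [hwE, Function.update_of_ne hw]
      · simp [hwE, hw]
    constructor
    · rw [Fml.eval_congr_s3 φ (fun w hw => hagree w (fun h' => hvφ (h' ▸ hw)))]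
      exact hsat τ
    · intro hτα
      have hvmem : v ∈ insert v E := Finset.mem_insert_self v E
      simp only [totalAsgn, hvmem, if_true, Function.update_self]
      have hovτ : ov τ = τ := by
        funext w
        simp only [hov]
        by_cases hwα : w ∈ adom
        · simp [hwα, hτα w hwα]
        · simp [hwα]
      rw [hovτ]
      apply hb
      intro y hy
      exact (hagree y.1 (hvY y hy)).symm
end

section
/- A closed prenex QBF is false if and only if there exists a set of Herbrand functions, one for each universal variable y (depending only on existential variables left of y), such that for every complete assignment of the existential variables, the assignment completed by the Herbrand values falsifies the matrix. -/
/-- A prenex quantifier prefix: a list of (isExistential, variable). -/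
abbrev Prefix := List (Bool × ℕ)

/-- The universal variables quantified to the left of x in the prefix. -/
def univsBefore : Prefix → ℕ → Finset ℕ
  | [], _ => ∅
  | (q, v) :: P, x =>
      if v = x then ∅ else (if q then univsBefore P x else insert v (univsBefore P x))

/-- Skolem-function semantics of truth for a closed prenex QBF. -/
def skTrue (P : Prefix) (φ : Fml) : Prop :=
  ∃ σ : ℕ → (ℕ → Bool) → Bool,
    (∀ x : ℕ, (true, x) ∈ P →
      ∀ τ τ' : ℕ → Bool, (∀ w ∈ univsBefore P x, τ w = τ' w) → σ x τ = σ x τ') ∧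
    ∀ τ : ℕ → Bool,
      φ.eval (fun w => if (true, w) ∈ P then σ w τ else τ w) = true


/-- The existential variables quantified to the left of y in the prefix. -/
def existsBefore : Prefix → ℕ → Finset ℕ
  | [], _ => ∅
  | (q, v) :: P, x =>
      if v = x then ∅ else (if q then insert v (existsBefore P x) else existsBefore P x)

/-- Herbrand-function semantics of falsity: there are countermove functions for
the universal variables, each depending only on the existential variables to its
left, falsifying the matrix under every existential assignment. -/
def hbFalse (P : Prefix) (φ : Fml) : Prop :=
  ∃ θ : ℕ → (ℕ → Bool) → Bool,
    (∀ y : ℕ, (false, y) ∈ P →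
      ∀ ε ε' : ℕ → Bool, (∀ w ∈ existsBefore P y, ε w = ε' w) → θ y ε = θ y ε') ∧
    ∀ ε : ℕ → Bool,
      φ.eval (fun w => if (false, w) ∈ P then θ w ε else ε w) = false

/-!
A closed QBF is true iff the existential player wins the evaluation game, and Skolem
functions are exactly the winning strategies of that player: peeling off the outermost
quantifier, a Skolem function for `∃ v` is a constant, and one for `∀ v` is a pair of
strategies indexed by the value of `v`. Herbrand functions for `Π φ` are Skolem functions
for the dual QBF `Π̄ ¬φ`, in which every quantifier is flipped, and by De Morgan the dual
QBF is true iff the original one is false.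
-/

namespace Fml

theorem eval_congr_s12 {φ : Fml} {α β : ℕ → Bool} (h : ∀ v ∈ φ.vars, α v = β v) :
    φ.eval α = φ.eval β := by
  induction φ with
  | tru | fls => rfl
  | var v => exact h v (Finset.mem_singleton_self v)
  | neg φ ih => simp only [eval, ih h]
  | conj φ ψ ihφ ihψ | disj φ ψ ihφ ihψ =>
      simp only [vars, Finset.mem_union] at h
      simp only [eval, ihφ fun v hv => h v (Or.inl hv), ihψ fun v hv => h v (Or.inr hv)]

theorem eval_substC_s12 (φ : Fml) (u : ℕ) (c : Bool) (α : ℕ → Bool) :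
    (φ.substC u c).eval α = φ.eval (Function.update α u c) := by
  induction φ with
  | tru | fls => rfl
  | var v =>
      by_cases h : v = u
      · subst h; cases c <;> simp [substC, eval]
      · simp [substC, eval, h]
  | neg φ ih => simp [substC, eval, ih]
  | conj φ ψ ihφ ihψ | disj φ ψ ihφ ihψ => simp [substC, eval, ihφ, ihψ]

theorem mem_vars_substC {φ : Fml} {u v : ℕ} {c : Bool} (h : v ∈ (φ.substC u c).vars) :
    v ∈ φ.vars ∧ v ≠ u := by
  induction φ with
  | tru | fls => simp [substC, vars] at h
  | var x =>
      by_cases hx : x = u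
      · cases c <;> simp [substC, vars, hx] at h
      · simp only [substC, hx, if_false, vars, Finset.mem_singleton] at h
        subst h
        exact ⟨Finset.mem_singleton_self v, hx⟩
  | neg φ ih => exact ih h
  | conj φ ψ ihφ ihψ | disj φ ψ ihφ ihψ =>
      simp only [substC, vars, Finset.mem_union] at h ⊢
      rcases h with h | h
      · exact ⟨Or.inl (ihφ h).1, (ihφ h).2⟩
      · exact ⟨Or.inr (ihψ h).1, (ihψ h).2⟩

end Fml

/-- The evaluation game. Once the prefix is used up the matrix is meant to be closed, so the
assignment it is evaluated at is arbitrary. -/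
def gameTrue : Prefix → Fml → Prop
  | [], φ => φ.eval (fun _ => false) = true
  | (q, v) :: P, φ =>
      if q then ∃ b, gameTrue P (φ.substC v b) else ∀ b, gameTrue P (φ.substC v b)

def Prefix.dual (P : Prefix) : Prefix := P.map fun p => (!p.1, p.2)

@[simp] theorem Prefix.dual_cons (q : Bool) (v : ℕ) (P : Prefix) :
    Prefix.dual ((q, v) :: P) = (!q, v) :: P.dual := rfl

theorem Prefix.map_snd_dual (P : Prefix) : P.dual.map Prod.snd = P.map Prod.snd := by
  simp [Prefix.dual]

theorem Prefix.mem_dual {P : Prefix} {q : Bool} {x : ℕ} : (q, x) ∈ P.dual ↔ (!q, x) ∈ P := by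
  simp only [Prefix.dual, List.mem_map, Prod.mk.injEq, Prod.exists]
  constructor
  · rintro ⟨r, _, hm, rfl, rfl⟩
    rwa [Bool.not_not]
  · exact fun h => ⟨!q, x, h, Bool.not_not q, rfl⟩

theorem univsBefore_dual (P : Prefix) (x : ℕ) : univsBefore P.dual x = existsBefore P x := by
  induction P with
  | nil => rfl
  | cons p P ih =>
      obtain ⟨q, v⟩ := p
      cases q <;> simp [univsBefore, existsBefore, ih]

theorem hbFalse_iff_skTrue_dual (P : Prefix) (φ : Fml) : hbFalse P φ ↔ skTrue P.dual φ.neg := by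
  refine exists_congr fun θ => and_congr ?_ (forall_congr' fun ε => ?_)
  · simp only [Prefix.mem_dual, univsBefore_dual, Bool.not_true]
  · simp only [Prefix.mem_dual, Bool.not_true, Fml.eval, Bool.not_eq_true']

theorem gameTrue_dual_neg (P : Prefix) (φ : Fml) : gameTrue P.dual φ.neg ↔ ¬ gameTrue P φ := by
  induction P generalizing φ with
  | nil => simp [gameTrue, Prefix.dual, Fml.eval]
  | cons p P ih =>
      obtain ⟨q, v⟩ := p
      cases q <;> simp only [Prefix.dual_cons, Bool.not_false, Bool.not_true, gameTrue, if_true,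
        Bool.false_eq_true, if_false, Fml.substC, ih, not_forall, not_exists]

section Skolem

variable {P : Prefix} {v : ℕ}

theorem skTrue_cons_false_iff (hv : v ∉ P.map Prod.snd) (φ : Fml) :
    skTrue ((false, v) :: P) φ ↔ ∀ b, skTrue P (φ.substC v b) := by
  have hvP : (true, v) ∉ P := fun h => hv (List.mem_map_of_mem h)
  have hub : ∀ x, (true, x) ∈ P → univsBefore ((false, v) :: P) x = insert v (univsBefore P x) :=
    fun x hx => by
      have hvx : v ≠ x := by rintro rfl; exact hvP hx
      simp [univsBefore, hvx]
  constructor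
  · rintro ⟨σ, hdep, hev⟩ b
    refine ⟨fun x τ => σ x (Function.update τ v b), fun x hx τ τ' hag => ?_, fun τ => ?_⟩
    · refine hdep x (List.mem_cons_of_mem _ hx) _ _ fun w hw => ?_
      rw [hub x hx, Finset.mem_insert] at hw
      by_cases hwv : w = v
      · simp [hwv]
      · simp [hwv, hag w (hw.resolve_left hwv)]
    · rw [Fml.eval_substC_s12]
      convert hev (Function.update τ v b) using 2
      funext w
      by_cases hwv : w = v
      · subst hwv; simp [hvP]
      · simp [hwv]
  · intro h
    choose σ hdep hev using h
    refine ⟨fun x τ => σ (τ v) x τ, fun x hx τ τ' hag => ?_, fun τ => ?_⟩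
    · have hx' : (true, x) ∈ P := by simpa using hx
      rw [hub x hx'] at hag
      simp only [hag v (Finset.mem_insert_self _ _)]
      exact hdep _ x hx' τ τ' fun w hw => hag w (Finset.mem_insert_of_mem hw)
    · have h := hev (τ v) τ
      rw [Fml.eval_substC_s12] at h
      convert h using 2
      funext w
      by_cases hwv : w = v
      · subst hwv; simp [hvP]
      · simp [hwv]

theorem skTrue_cons_true_iff (hv : v ∉ P.map Prod.snd) (φ : Fml) :
    skTrue ((true, v) :: P) φ ↔ ∃ b, skTrue P (φ.substC v b) := by
  have hub : ∀ x, (true, x) ∈ P → univsBefore ((true, v) :: P) x = univsBefore P x :=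
    fun x hx => by
      have hvx : v ≠ x := by rintro rfl; exact hv (List.mem_map_of_mem hx)
      simp [univsBefore, hvx]
  constructor
  · rintro ⟨σ, hdep, hev⟩
    -- nothing precedes `v`, so its Skolem function is a constant
    have hconst : ∀ τ, σ v τ = σ v fun _ => false :=
      fun τ => hdep v List.mem_cons_self _ _ fun w hw => by simp [univsBefore] at hw
    refine ⟨σ v fun _ => false, σ, fun x hx => hub x hx ▸ hdep x (List.mem_cons_of_mem _ hx),
      fun τ => ?_⟩
    rw [Fml.eval_substC_s12]
    convert hev τ using 2
    funext w
    by_cases hwv : w = v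
    · subst hwv; simp [hconst]
    · simp [hwv]
  · rintro ⟨b, σ, hdep, hev⟩
    refine ⟨fun x τ => if x = v then b else σ x τ, fun x hx τ τ' hag => ?_, fun τ => ?_⟩
    · by_cases hxv : x = v
      · simp [hxv]
      · have hx' : (true, x) ∈ P := by simpa [hxv] using hx
        simp only [hxv, if_false]
        exact hdep x hx' τ τ' (hub x hx' ▸ hag)
    · have h := hev τ
      rw [Fml.eval_substC_s12] at h
      convert h using 2
      funext w
      by_cases hwv : w = v
      · subst hwv; simp
      · simp [hwv]

end Skolem

theorem skTrue_iff_gameTrue {P : Prefix} {φ : Fml} (hnd : (P.map Prod.snd).Nodup)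
    (hcl : ∀ v ∈ φ.vars, v ∈ P.map Prod.snd) : skTrue P φ ↔ gameTrue P φ := by
  induction P generalizing φ with
  | nil =>
      have hconst : ∀ α, φ.eval α = φ.eval fun _ => false :=
        fun α => Fml.eval_congr_s12 fun v hv => absurd (hcl v hv) List.not_mem_nil
      simp only [skTrue, gameTrue, List.not_mem_nil, hconst]
      exact ⟨fun ⟨_, _, h⟩ => h fun _ => false, fun h => ⟨fun _ _ => false, by simp, fun _ => h⟩⟩
  | cons p P ih =>
      obtain ⟨q, v⟩ := p
      rw [List.map_cons, List.nodup_cons] at hnd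
      have ihb : ∀ b, skTrue P (φ.substC v b) ↔ gameTrue P (φ.substC v b) := fun b =>
        ih hnd.2 fun w hw => by
          obtain ⟨hw, hwv⟩ := Fml.mem_vars_substC hw
          simpa [hwv] using hcl w hw
      cases q
      · simp only [skTrue_cons_false_iff hnd.1, gameTrue, ihb, Bool.false_eq_true, if_false]
      · simp only [skTrue_cons_true_iff hnd.1, gameTrue, ihb, if_true]

/-- A closed prenex QBF is false iff it has a set of Herbrand functions. -/
theorem qbf_false_iff_herbrand (P : Prefix) (φ : Fml)
    (hnd : (P.map Prod.snd).Nodup)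
    (hcl : ∀ v ∈ φ.vars, v ∈ P.map Prod.snd) :
    ¬ skTrue P φ ↔ hbFalse P φ := by
  have hnd' : (P.dual.map Prod.snd).Nodup := P.map_snd_dual ▸ hnd
  have hcl' : ∀ v ∈ φ.neg.vars, v ∈ P.dual.map Prod.snd := P.map_snd_dual ▸ hcl
  rw [hbFalse_iff_skTrue_dual, skTrue_iff_gameTrue hnd hcl, skTrue_iff_gameTrue hnd' hcl',
    gameTrue_dual_neg]
end

section
/- If the Skolem functions {σ_x} satisfy the clause C₁ ∪ C₂ for every universal assignment, then defining e(τ) := min over all assignments τ' of the marginal universal variables of C₂ (those in D-set of C₂ but not of C₁) of the truth value of C₂ under (τ updated by τ', σ), the clause ē ∨ C₂ is satisfied for every universal assignment, and the clause e ∨ C₁ is satisfied for every universal assignment. -/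
def evalLit (α : ℕ → Bool) (l : Lit) : Bool := if l.2 then α l.1 else !(α l.1)

abbrev Clause := Finset Lit
abbrev CNF := Finset Clause

def clauseSat (α : ℕ → Bool) (C : Clause) : Prop := ∃ l ∈ C, evalLit α l = true

/-- Dependency set of a clause: union of the dependency sets of its literals. -/
def clauseDeps (E : Finset ℕ) (dep : ℕ → Finset ℕ) (C : Clause) : Finset ℕ :=
  C.biUnion (fun l => depOf E dep l.1)

def cnfVars (φ : CNF) : Finset ℕ := φ.biUnion (fun C => C.image Prod.fst)

/-- The marginal universal variables of C₂ w.r.t. C₁: universal variables in the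
dependency set of C₂ but not of C₁. -/
def marginalU (E : Finset ℕ) (dep : ℕ → Finset ℕ) (C₁ C₂ : Clause) : Finset ℕ :=
  (clauseDeps E dep C₂ \ clauseDeps E dep C₁) \ E

open Classical in
/-- e(τ) := min over all reassignments τ' of the marginal universal variables of
C₂ of the truth value of C₂ under (τ updated by τ', σ). -/
noncomputable def eFun (E : Finset ℕ) (dep : ℕ → Finset ℕ)
    (σ : ℕ → (ℕ → Bool) → Bool) (C₁ C₂ : Clause) : (ℕ → Bool) → Bool :=
  fun τ =>
    if (∀ τ' : ℕ → Bool,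
        clauseSat
          (totalAsgn E σ (fun w => if w ∈ marginalU E dep C₁ C₂ then τ' w else τ w))
          C₂)
    then true else false

/-- If the Skolem functions satisfy C₁ ∪ C₂ for every universal assignment, then
with the fork-extension function e as above, both ē ∨ C₂ and e ∨ C₁ are
satisfied for every universal assignment. -/
theorem fork_extension_function_correct
    (E : Finset ℕ) (dep : ℕ → Finset ℕ) (C₁ C₂ : Clause)
    (σ : ℕ → (ℕ → Bool) → Bool)
    (hσ : skolemDeps E dep σ)
    (hsat : ∀ τ : ℕ → Bool, clauseSat (totalAsgn E σ τ) (C₁ ∪ C₂))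
    (ve : ℕ) (hveE : ve ∉ E) (hveC : ∀ l ∈ C₁ ∪ C₂, l.1 ≠ ve) :
    ∀ τ : ℕ → Bool,
      clauseSat
        (totalAsgn (insert ve E) (Function.update σ ve (eFun E dep σ C₁ C₂)) τ)
        (insert (ve, false) C₂) ∧
      clauseSat
        (totalAsgn (insert ve E) (Function.update σ ve (eFun E dep σ C₁ C₂)) τ)
        (insert (ve, true) C₁) := by
  intro τ
  set f := eFun E dep σ C₁ C₂ with hf
  set α := totalAsgn (insert ve E) (Function.update σ ve f) τ with hα
  have hαve : α ve = f τ := by simp [hα, totalAsgn]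
  have hother : ∀ x, x ≠ ve → α x = totalAsgn E σ τ x := by
    intro x hx
    simp [hα, totalAsgn, Finset.mem_insert, hx, Function.update_of_ne hx]
  by_cases he : ∀ τ' : ℕ → Bool,
      clauseSat (totalAsgn E σ
        (fun w => if w ∈ marginalU E dep C₁ C₂ then τ' w else τ w)) C₂
  · have hft : f τ = true := by simp [hf, eFun, if_pos he]
    constructor
    · have h2 := he τ
      have heqτ : (fun w => if w ∈ marginalU E dep C₁ C₂ then τ w else τ w) = τ := by
        funext w; simp
      rw [heqτ] at h2
      obtain ⟨l, hl, hev⟩ := h2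
      have hne : l.1 ≠ ve := hveC l (Finset.mem_union_right _ hl)
      refine ⟨l, Finset.mem_insert_of_mem hl, ?_⟩
      simpa [evalLit, hother l.1 hne] using hev
    · exact ⟨(ve, true), Finset.mem_insert_self _ _, by simp [evalLit, hαve, hft]⟩
  · have hff : f τ = false := by simp [hf, eFun, if_neg he]
    push_neg at he
    obtain ⟨τ', hτ'⟩ := he
    refine ⟨⟨(ve, false), Finset.mem_insert_self _ _, by simp [evalLit, hαve, hff]⟩, ?_⟩
    set τ'' := fun w => if w ∈ marginalU E dep C₁ C₂ then τ' w else τ w with hτ''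
    obtain ⟨l, hl, hev⟩ := hsat τ''
    rcases Finset.mem_union.mp hl with h1 | h2
    · have hdep : ∀ w ∈ depOf E dep l.1, τ'' w = τ w := by
        intro w hw
        have hwD : w ∈ clauseDeps E dep C₁ := Finset.mem_biUnion.mpr ⟨l, h1, hw⟩
        have hwM : w ∉ marginalU E dep C₁ C₂ := by
          simp only [marginalU, Finset.mem_sdiff]; tauto
        simp [hτ'', hwM]
      have heq : totalAsgn E σ τ'' l.1 = totalAsgn E σ τ l.1 := by
        by_cases hE : l.1 ∈ E
        · simp only [totalAsgn, if_pos hE]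
          exact hσ l.1 hE τ'' τ (fun w hw => hdep w (by simp [depOf, hE, hw]))
        · simp only [totalAsgn, if_neg hE]
          exact hdep l.1 (by simp [depOf, hE])
      have hne : l.1 ≠ ve := hveC l hl
      refine ⟨l, Finset.mem_insert_of_mem h1, ?_⟩
      have hal : α l.1 = totalAsgn E σ τ'' l.1 := by rw [hother l.1 hne, ← heq]
      simpa [evalLit, hal] using hev
    · exact absurd ⟨l, h2, hev⟩ hτ'
end

section
/- Substitution replacement soundness for QRATA-style definitions: let φ be a CNF, l an existential literal, and define l' := l ∨ ⋀_{D∈φ, l̄∈D} O_D where O_D is the outer clause of D with respect to l. Then for every clause K ∈ φ: (i) if K contains neither l nor l̄, K is unchanged; (ii) if l ∈ K then K with l replaced by l' is entailed by φ; (iii) if l̄ ∈ K then K with l̄ replaced by l̄' is entailed by φ; in each case entailment is propositional (over all assignments to all variables, interpreting l' by its definition). -/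
def negLit (l : Lit) : Lit := (l.1, !l.2)

def cnfSat (α : ℕ → Bool) (φ : CNF) : Prop := ∀ C ∈ φ, clauseSat α C

open Classical in
/-- The outer clause of D with respect to the existential literal l:
existential literals of D with dependency set ⊆ D_{var l} and different
variable, together with universal literals of D whose variable is in D_{var l}. -/
noncomputable def outer (E : Finset ℕ) (dep : ℕ → Finset ℕ) (l : Lit) (D : Clause) :
    Clause :=
  D.filter (fun k =>
    if k.1 ∈ E then (dep k.1 ⊆ dep l.1 ∧ k.1 ≠ l.1) else k.1 ∈ dep l.1)

/-- The truth value of l' := l ∨ ⋀_{D∈φ, l̄∈D} O_D under an assignment α. -/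
def lPrimeVal (φ : CNF) (E : Finset ℕ) (dep : ℕ → Finset ℕ) (l : Lit)
    (α : ℕ → Bool) : Prop :=
  evalLit α l = true ∨ ∀ D ∈ φ, negLit l ∈ D → clauseSat α (outer E dep l D)

/-- Substitution replacement soundness for QRATA-style definitions: replacing l
by l' := l ∨ ⋀_{D∈φ, l̄∈D} O_D in any clause of φ yields a clause entailed by φ. -/
theorem qrata_substitution_sound
    (φ : CNF) (E : Finset ℕ) (dep : ℕ → Finset ℕ) (l : Lit) (hl : l.1 ∈ E) :
    ∀ α : ℕ → Bool, cnfSat α φ → ∀ K ∈ φ,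
      ((l ∉ K ∧ negLit l ∉ K) → clauseSat α K) ∧
      (l ∈ K → (clauseSat α (K.erase l) ∨ lPrimeVal φ E dep l α)) ∧
      (negLit l ∈ K →
        (clauseSat α (K.erase (negLit l)) ∨ ¬ lPrimeVal φ E dep l α)) := by
  intro α hsat K hK
  refine ⟨fun _ => hsat K hK, ?_, ?_⟩
  · intro hlK
    obtain ⟨k, hkK, hke⟩ := hsat K hK
    by_cases hkl : k = l
    · exact Or.inr (Or.inl (hkl ▸ hke))
    · exact Or.inl ⟨k, Finset.mem_erase.mpr ⟨hkl, hkK⟩, hke⟩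
  · intro hnlK
    by_cases herase : clauseSat α (K.erase (negLit l))
    · exact Or.inl herase
    refine Or.inr ?_
    obtain ⟨k, hkK, hke⟩ := hsat K hK
    have hkl : k = negLit l := by
      by_contra hne
      exact herase ⟨k, Finset.mem_erase.mpr ⟨hne, hkK⟩, hke⟩
    subst hkl
    have hlfalse : evalLit α l = false := by
      rcases l with ⟨v, b⟩
      cases b <;> simp_all [evalLit, negLit]
    intro hlp
    rcases hlp with h | h
    · rw [hlfalse] at h; exact Bool.false_ne_true h
    · obtain ⟨k, hk, hke2⟩ := h K hK hnlK
      rw [outer, Finset.mem_filter] at hk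
      refine herase ⟨k, Finset.mem_erase.mpr ⟨?_, hk.1⟩, hke2⟩
      intro heq
      have := hk.2
      rw [heq] at this
      simp [negLit, hl] at this
end

section
/- QRATA truth preservation: let ∀U ∃E φ be a true S-form DQBF, l an existential literal, C a clause containing l, and suppose for every clause D ∈ φ with l̄ ∈ D the CNF φ ∧ C̄ ∧ Ō_D ∧ l̄ is propositionally unsatisfiable. Then the DQBF ∀U ∃E (φ ∧ C) is true, witnessed by changing only the Skolem function of var(l) to σ'_l := σ_l ∨ ⋀_{D∈φ, l̄∈D} O_D evaluated under the Skolem functions. -/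
open Classical in
/-- The modified Skolem functions: only the Skolem function of var(l) changes, to
σ'_l := σ_l ∨ ⋀_{D∈φ, l̄∈D} O_D evaluated under the old Skolem functions. -/
noncomputable def newSigma (φ : CNF) (E : Finset ℕ) (dep : ℕ → Finset ℕ)
    (l : Lit) (σ : ℕ → (ℕ → Bool) → Bool) : ℕ → (ℕ → Bool) → Bool :=
  fun x τ =>
    if x = l.1 then
      (let oc : Bool :=
        if (∀ D ∈ φ, negLit l ∈ D → clauseSat (totalAsgn E σ τ) (outer E dep l D))
        then true else false
       if l.2 then σ x τ || oc else σ x τ && !oc)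
    else σ x τ

lemma outer_mem {E : Finset ℕ} {dep : ℕ → Finset ℕ} {l : Lit} {D : Clause}
    (hlE : l.1 ∈ E) {k : Lit} (hk : k ∈ outer E dep l D) : k ∈ D ∧ k.1 ≠ l.1 := by
  classical
  simp only [outer, Finset.mem_filter] at hk
  refine ⟨hk.1, ?_⟩
  by_cases hkE : k.1 ∈ E
  · rw [if_pos hkE] at hk; exact hk.2.2
  · rw [if_neg hkE] at hk; intro h; exact hkE (h ▸ hlE)

lemma evalLit_congr {α α' : ℕ → Bool} {k : Lit} (h : α k.1 = α' k.1) :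
    evalLit α k = evalLit α' k := by simp [evalLit, h]

/-- QRATA truth preservation: if ∀U ∃E φ is true (witnessed by σ), l is an
existential literal of the clause C, and for every D ∈ φ with l̄ ∈ D the CNF
φ ∧ C̄ ∧ Ō_D ∧ l̄ is propositionally unsatisfiable, then ∀U ∃E (φ ∧ C) is true,
witnessed by changing only the Skolem function of var(l) as in `newSigma`. -/
theorem qrata_truth_preservation
    (φ : CNF) (E : Finset ℕ) (dep : ℕ → Finset ℕ) (C : Clause) (l : Lit)
    (hlE : l.1 ∈ E) (hlC : l ∈ C)
    (σ : ℕ → (ℕ → Bool) → Bool)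
    (hσ : skolemDeps E dep σ)
    (hsat : ∀ τ : ℕ → Bool, cnfSat (totalAsgn E σ τ) φ)
    (hunsat : ∀ D ∈ φ, negLit l ∈ D →
      ¬ ∃ α : ℕ → Bool, cnfSat α φ ∧
        (∀ k ∈ C, evalLit α k = false) ∧
        (∀ k ∈ outer E dep l D, evalLit α k = false) ∧
        evalLit α l = false) :
    skolemDeps E dep (newSigma φ E dep l σ) ∧
    ∀ τ : ℕ → Bool, cnfSat (totalAsgn E (newSigma φ E dep l σ) τ) (insert C φ) := by
  classical
  constructor
  · -- skolemDeps for newSigma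
    intro x hx τ τ' hagree
    unfold newSigma
    by_cases hx1 : x = l.1
    · rw [if_pos hx1, if_pos hx1]
      have hσeq : σ x τ = σ x τ' := hσ x hx τ τ' hagree
      have hagree' : ∀ w ∈ dep l.1, τ w = τ' w := by rw [← hx1]; exact hagree
      have hocc : (∀ D ∈ φ, negLit l ∈ D → clauseSat (totalAsgn E σ τ) (outer E dep l D)) ↔
          (∀ D ∈ φ, negLit l ∈ D → clauseSat (totalAsgn E σ τ') (outer E dep l D)) := by
        have key : ∀ D : Clause, ∀ k ∈ outer E dep l D,
            evalLit (totalAsgn E σ τ) k = evalLit (totalAsgn E σ τ') k := by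
          intro D k hk
          simp only [outer, Finset.mem_filter] at hk
          obtain ⟨hkD, hcond⟩ := hk
          by_cases hkE : k.1 ∈ E
          · rw [if_pos hkE] at hcond
            have h2 := hσ k.1 hkE τ τ' (fun w hw => hagree' w (hcond.1 hw))
            exact evalLit_congr (by simp [totalAsgn, hkE, h2])
          · rw [if_neg hkE] at hcond
            exact evalLit_congr (by simp [totalAsgn, hkE, hagree' k.1 hcond])
        constructor <;> intro h D hD hl
        · obtain ⟨k, hk, hev⟩ := h D hD hl
          exact ⟨k, hk, by rw [← key D k hk]; exact hev⟩
        · obtain ⟨k, hk, hev⟩ := h D hD hl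
          exact ⟨k, hk, by rw [key D k hk]; exact hev⟩
      by_cases h : ∀ D ∈ φ, negLit l ∈ D → clauseSat (totalAsgn E σ τ) (outer E dep l D)
      · rw [if_pos h, if_pos (hocc.mp h), hσeq]
      · rw [if_neg h, if_neg (fun h' => h (hocc.mpr h')), hσeq]
    · rw [if_neg hx1, if_neg hx1]
      exact hσ x hx τ τ' hagree
  · -- truth of insert C φ
    intro τ
    have hαφ : cnfSat (totalAsgn E σ τ) φ := hsat τ
    have hdiff : ∀ w, w ≠ l.1 →
        totalAsgn E (newSigma φ E dep l σ) τ w = totalAsgn E σ τ w := by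
      intro w hw; simp [totalAsgn, newSigma, hw]
    have hαl : totalAsgn E σ τ l.1 = σ l.1 τ := by simp [totalAsgn, hlE]
    have hα'l0 : totalAsgn E (newSigma φ E dep l σ) τ l.1 = newSigma φ E dep l σ l.1 τ := by
      simp [totalAsgn, hlE]
    by_cases hoc : ∀ D ∈ φ, negLit l ∈ D → clauseSat (totalAsgn E σ τ) (outer E dep l D)
    · -- oc = true: the new Skolem function makes l true
      have hval : newSigma φ E dep l σ l.1 τ =
          (if l.2 then σ l.1 τ || true else σ l.1 τ && !true) := by
        unfold newSigma
        rw [if_pos rfl, if_pos hoc]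
      have hl' : evalLit (totalAsgn E (newSigma φ E dep l σ) τ) l = true := by
        simp only [evalLit, hα'l0, hval]
        cases hl2 : l.2 <;> simp [hl2]
      intro D hD
      rcases Finset.mem_insert.mp hD with rfl | hDφ
      · exact ⟨l, hlC, hl'⟩
      · obtain ⟨k, hkD, hke⟩ := hαφ D hDφ
        by_cases hk1 : k.1 = l.1
        · by_cases hk2 : k.2 = l.2
          · have hkl : k = l := Prod.ext hk1 hk2
            exact ⟨l, hkl ▸ hkD, hl'⟩
          · have hkneg : k = negLit l := by
              have h2 : k.2 = !l.2 := by
                revert hk2; cases k.2 <;> cases l.2 <;> decide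
              exact Prod.ext hk1 h2
            obtain ⟨m, hm, hme⟩ := hoc D hDφ (hkneg ▸ hkD)
            obtain ⟨hmD, hmne⟩ := outer_mem hlE hm
            exact ⟨m, hmD, by rw [evalLit_congr (hdiff m.1 hmne)]; exact hme⟩
        · exact ⟨k, hkD, by rw [evalLit_congr (hdiff k.1 hk1)]; exact hke⟩
    · -- oc = false: the assignment is unchanged
      have hval : newSigma φ E dep l σ l.1 τ = σ l.1 τ := by
        unfold newSigma
        rw [if_pos rfl, if_neg hoc]
        cases hl2 : l.2 <;> simp [hl2]
      have hall : ∀ w, totalAsgn E (newSigma φ E dep l σ) τ w = totalAsgn E σ τ w := by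
        intro w
        by_cases hw : w = l.1
        · subst hw; rw [hα'l0, hval, hαl]
        · exact hdiff w hw
      intro D hD
      rcases Finset.mem_insert.mp hD with hDC | hDφ
      · -- the clause C
        rw [hDC]
        by_cases hevl : evalLit (totalAsgn E σ τ) l = true
        · exact ⟨l, hlC, by rw [evalLit_congr (hall l.1)]; exact hevl⟩
        · have hevl' : evalLit (totalAsgn E σ τ) l = false := by
            cases h : evalLit (totalAsgn E σ τ) l
            · rfl
            · exact absurd h hevl
          push_neg at hoc
          obtain ⟨D0, hD0φ, hlD0, hD0out⟩ := hoc
          have hCsat : clauseSat (totalAsgn E σ τ) C := by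
            by_contra hC
            apply hunsat D0 hD0φ hlD0
            refine ⟨totalAsgn E σ τ, hαφ, ?_, ?_, hevl'⟩
            · intro k hk
              cases h : evalLit (totalAsgn E σ τ) k
              · rfl
              · exact absurd ⟨k, hk, h⟩ hC
            · intro k hk
              cases h : evalLit (totalAsgn E σ τ) k
              · rfl
              · exact absurd ⟨k, hk, h⟩ hD0out
          obtain ⟨k, hk, hke⟩ := hCsat
          exact ⟨k, hk, by rw [evalLit_congr (hall k.1)]; exact hke⟩
      · obtain ⟨k, hkD, hke⟩ := hαφ D hDφ
        exact ⟨k, hkD, by rw [evalLit_congr (hall k.1)]; exact hke⟩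
end
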